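/- Fix real numbers t₀ < t₀+t, a < b and ε̃₁, ε̃₂ > 0 with ε̃₂ < t. For a compact set K of paths in the path space (Π,d), let η̃(K) be the number of distinct points in ℝ×{t₀+t} touched by paths in K that start before time t₀+ε̃₂ and touch the open set (a-ε̃₁, b+ε̃₁)×{t₀+ε̃₂}. Then for each integer k, the set {K ∈ H : η̃(K) ≥ k} is open in the Hausdorff metric topology on H. -/

import Mathlib

open Filter Topology

/-- `tanh` extended to `[-∞,∞]` with `tanh(±∞) = ±1`. -/
noncomputable def etanh (x : EReal) : ℝ :=
  if x = ⊤ then 1 else if x = ⊥ then -1 else Real.tanh x.toReal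

/-- `Φ(x,t) = tanh(x)/(1+|t|)`, extended to `[-∞,∞]²` (equal to `0` when `t = ±∞`). -/
noncomputable def PhiBar (x t : EReal) : ℝ :=
  if t = ⊤ ∨ t = ⊥ then 0 else etanh x / (1 + |t.toReal|)
/-- `Ψ(t) = tanh(t)` extended to `[-∞,∞]`. -/
noncomputable def PsiBar (t : EReal) : ℝ := etanh t

/-- The path space `Π`: a path is a pair of a starting time `t₀ ∈ [-∞,∞]` and a function
`f̂ : [-∞,∞] → [-∞,∞]` (the extension of `f : [t₀,∞] → [-∞,∞]` which is constant `= f(t₀)`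
before `t₀`), such that `t ↦ Φ(f̂(t),t)` is continuous. -/
def PathSpace : Type :=
  { p : EReal × (EReal → EReal) //
      (∀ s, s ≤ p.1 → p.2 s = p.2 p.1) ∧ Continuous (fun s => PhiBar (p.2 s) s) }

/-- The metric `d((f₁,t₁),(f₂,t₂)) = sup_t |Φ(f̂₁(t),t) - Φ(f̂₂(t),t)| ⊔ |Ψ(t₁) - Ψ(t₂)|`. -/
noncomputable def pathDist (p q : PathSpace) : ℝ :=
  (⨆ s : EReal, |PhiBar (p.1.2 s) s - PhiBar (q.1.2 s) s|) ⊔ |PsiBar p.1.1 - PsiBar q.1.1|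
/-- Sequential compactness (equivalently, compactness) of a set of paths w.r.t. `d`. -/
def IsPathCompact (K : Set PathSpace) : Prop :=
  K.Nonempty ∧ ∀ u : ℕ → PathSpace, (∀ n, u n ∈ K) →
    ∃ x ∈ K, ∃ φ : ℕ → ℕ, StrictMono φ ∧
      ∀ ε > (0:ℝ), ∃ N, ∀ n ≥ N, pathDist (u (φ n)) x < ε

/-- The Hausdorff distance on sets of paths induced by `d`. -/
noncomputable def hausdDist (K₁ K₂ : Set PathSpace) : ℝ :=
  sSup ((fun g₁ => sInf ((fun g₂ => pathDist g₁ g₂) '' K₂)) '' K₁) ⊔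
    sSup ((fun g₂ => sInf ((fun g₁ => pathDist g₁ g₂) '' K₁)) '' K₂)

/-- A path `(f,s)` touches the space-time point `(x,u)` if `s ≤ u` and `f(u) = x`. -/
def TouchesPt (p : PathSpace) (x u : ℝ) : Prop :=
  p.1.1 ≤ (u : EReal) ∧ p.1.2 (u : EReal) = (x : EReal)

/-- `η̃(K) ≥ k`: there are at least `k` distinct points of `ℝ × {t₀+t}` touched by paths in `K`
which start before time `t₀+ε̃₂` and touch `(a-ε̃₁, b+ε̃₁) × {t₀+ε̃₂}`. -/
def CountGE (t₀ t a b e₁ e₂ : ℝ) (k : ℕ) (K : Set PathSpace) : Prop :=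
  ∃ S : Finset ℝ, S.card = k ∧ ∀ x ∈ S, ∃ p ∈ K,
    p.1.1 < ((t₀ + e₂ : ℝ) : EReal) ∧
    (∃ y ∈ Set.Ioo (a - e₁) (b + e₁), p.1.2 ((t₀ + e₂ : ℝ) : EReal) = (y : EReal)) ∧
    TouchesPt p x (t₀ + t)


lemma tanh_formula (x : ℝ) : Real.tanh x = 1 - 2 / (Real.exp (2*x) + 1) := by
  have h1 : Real.exp x > 0 := Real.exp_pos x
  have h2 : Real.exp (-x) > 0 := Real.exp_pos _
  have h3 : Real.exp (2*x) = Real.exp x * Real.exp x := by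
    rw [two_mul, Real.exp_add]
  have h4 : Real.exp x * Real.exp (-x) = 1 := by
    rw [← Real.exp_add]; simp
  rw [Real.tanh_eq_sinh_div_cosh, Real.sinh_eq, Real.cosh_eq]
  field_simp
  rw [mul_comm x 2, h3]
  linear_combination (-2 * Real.exp x) * h4

lemma tanh_strictMono' : StrictMono Real.tanh := by
  intro x y hxy
  rw [tanh_formula, tanh_formula]
  have h1 : (0:ℝ) < Real.exp (2*x) + 1 := by positivity
  have h2 : Real.exp (2*x) + 1 < Real.exp (2*y) + 1 := by
    have := Real.exp_lt_exp.mpr (by linarith : 2*x < 2*y); linarith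
  have := div_lt_div_of_pos_left (by norm_num : (0:ℝ) < 2) h1 h2
  linarith

lemma tanh_lt_one' (x : ℝ) : Real.tanh x < 1 := by
  rw [tanh_formula]
  have : (0:ℝ) < 2 / (Real.exp (2*x) + 1) := by positivity
  linarith

lemma neg_one_lt_tanh' (x : ℝ) : -1 < Real.tanh x := by
  rw [tanh_formula]
  have h1 : (0:ℝ) < Real.exp (2*x) + 1 := by positivity
  have : 2 / (Real.exp (2*x) + 1) < 2 := by
    rw [div_lt_iff₀ h1]; nlinarith [Real.exp_pos (2*x)]
  linarith

lemma etanh_coe (r : ℝ) : etanh (r : EReal) = Real.tanh r := by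
  simp [etanh]

lemma abs_etanh_le (x : EReal) : |etanh x| ≤ 1 := by
  unfold etanh
  split_ifs with h1 h2
  · norm_num
  · norm_num
  · rw [abs_le]; constructor
    · linarith [neg_one_lt_tanh' x.toReal]
    · linarith [tanh_lt_one' x.toReal]

lemma etanh_strictMono : StrictMono etanh := by
  intro x y hxy
  induction x using EReal.rec with
  | bot =>
    induction y using EReal.rec with
    | bot => exact absurd hxy (lt_irrefl _)
    | coe r => simpa [etanh] using neg_one_lt_tanh' r
    | top => norm_num [etanh]
  | coe r =>
    induction y using EReal.rec with
    | bot => exact absurd hxy (by simp)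
    | coe s =>
      rw [etanh_coe, etanh_coe]
      exact tanh_strictMono' (EReal.coe_lt_coe_iff.mp hxy)
    | top => simpa [etanh] using tanh_lt_one' r
  | top => exact absurd hxy (by simp)

lemma lt_of_etanh_lt {x y : EReal} (h : etanh x < etanh y) : x < y := by
  by_contra hc
  exact absurd (etanh_strictMono.monotone (not_lt.mp hc)) (not_le.mpr h)

lemma etanh_finite {z : EReal} (h : |etanh z| < 1) : z = ((z.toReal : ℝ) : EReal) := by
  induction z using EReal.rec with
  | bot => simp [etanh] at h
  | coe r => simp
  | top => simp [etanh] at h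

lemma PhiBar_coe (x : EReal) (t : ℝ) : PhiBar x (t : EReal) = etanh x / (1 + |t|) := by
  simp [PhiBar]

lemma abs_PhiBar_le (x t : EReal) : |PhiBar x t| ≤ 1 := by
  unfold PhiBar
  split_ifs with h
  · norm_num
  · rw [abs_div, abs_of_pos (show (0:ℝ) < 1 + |t.toReal| by positivity)]
    rw [div_le_one (show (0:ℝ) < 1 + |t.toReal| by positivity)]
    calc |etanh x| ≤ 1 := abs_etanh_le x
      _ ≤ 1 + |t.toReal| := by linarith [abs_nonneg t.toReal]

lemma phi_term_bdd (p q : PathSpace) :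
    BddAbove (Set.range fun s => |PhiBar (p.1.2 s) s - PhiBar (q.1.2 s) s|) := by
  refine ⟨2, ?_⟩
  rintro _ ⟨s, rfl⟩
  calc |PhiBar (p.1.2 s) s - PhiBar (q.1.2 s) s|
      ≤ |PhiBar (p.1.2 s) s| + |PhiBar (q.1.2 s) s| := abs_sub _ _
    _ ≤ 2 := by linarith [abs_PhiBar_le (p.1.2 s) s, abs_PhiBar_le (q.1.2 s) s]

lemma phi_le_pathDist (p q : PathSpace) (s : EReal) :
    |PhiBar (p.1.2 s) s - PhiBar (q.1.2 s) s| ≤ pathDist p q :=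
  le_trans (le_ciSup (phi_term_bdd p q) s) le_sup_left

lemma psi_le_pathDist (p q : PathSpace) :
    |PsiBar p.1.1 - PsiBar q.1.1| ≤ pathDist p q := le_sup_right

lemma pathDist_nonneg (p q : PathSpace) : 0 ≤ pathDist p q :=
  le_trans (abs_nonneg _) (psi_le_pathDist p q)

lemma pathDist_le_two (p q : PathSpace) : pathDist p q ≤ 2 := by
  refine sup_le (ciSup_le fun s => ?_) ?_
  · calc |PhiBar (p.1.2 s) s - PhiBar (q.1.2 s) s|
        ≤ |PhiBar (p.1.2 s) s| + |PhiBar (q.1.2 s) s| := abs_sub _ _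
      _ ≤ 2 := by linarith [abs_PhiBar_le (p.1.2 s) s, abs_PhiBar_le (q.1.2 s) s]
  · unfold PsiBar
    calc |etanh p.1.1 - etanh q.1.1| ≤ |etanh p.1.1| + |etanh q.1.1| := abs_sub _ _
      _ ≤ 2 := by linarith [abs_etanh_le p.1.1, abs_etanh_le q.1.1]

lemma exists_close {K K' : Set PathSpace} (hK' : K'.Nonempty) {p : PathSpace}
    (hp : p ∈ K) {ε : ℝ} (h : hausdDist K K' < ε) : ∃ q ∈ K', pathDist p q < ε := by
  obtain ⟨q0, hq0⟩ := hK'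
  have hbddA : BddAbove ((fun g₁ => sInf ((fun g₂ => pathDist g₁ g₂) '' K')) '' K) := by
    refine ⟨2, ?_⟩
    rintro _ ⟨g, hg, rfl⟩
    exact csInf_le_of_le ⟨0, by rintro _ ⟨q, hq, rfl⟩; exact pathDist_nonneg _ _⟩
      ⟨q0, hq0, rfl⟩ (pathDist_le_two _ _)
  have h1 : sInf ((fun g₂ => pathDist p g₂) '' K') < ε :=
    lt_of_le_of_lt (le_trans (le_csSup hbddA ⟨p, hp, rfl⟩) le_sup_left) h
  obtain ⟨v, ⟨q, hq, rfl⟩, hv⟩ := exists_lt_of_csInf_lt (Set.Nonempty.image _ ⟨q0, hq0⟩) h1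
  exact ⟨q, hq, hv⟩

lemma exists_sep (S : Finset ℝ) : ∃ δ > (0:ℝ), ∀ x ∈ S, ∀ y ∈ S, x ≠ y →
    δ ≤ |Real.tanh x - Real.tanh y| := by
  set s : Set ℝ := Real.tanh '' ↑S with hs
  by_cases hnt : s.Nontrivial
  · have hfin : s.Finite := (S.finite_toSet).image _
    have hpos : 0 < s.infsep := by
      rw [Set.infsep_pos]
      exact ⟨hfin.einfsep_pos, hnt.einfsep_lt_top⟩
    refine ⟨s.infsep, hpos, fun x hx y hy hxy => ?_⟩
    have hxm : Real.tanh x ∈ s := ⟨x, hx, rfl⟩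
    have hym : Real.tanh y ∈ s := ⟨y, hy, rfl⟩
    have := Set.infsep_le_dist_of_mem hxm hym
      (fun he => hxy (tanh_strictMono'.injective he))
    rwa [Real.dist_eq] at this
  · refine ⟨1, one_pos, fun x hx y hy hxy => ?_⟩
    have hxm : Real.tanh x ∈ s := ⟨x, hx, rfl⟩
    have hym : Real.tanh y ∈ s := ⟨y, hy, rfl⟩
    exact absurd ⟨Real.tanh x, hxm, Real.tanh y, hym,
      fun he => hxy (tanh_strictMono'.injective he)⟩ hnt

lemma key_est {p q : PathSpace} {ε : ℝ} (h : pathDist p q < ε) (s : ℝ) :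
    |etanh (p.1.2 (s : EReal)) - etanh (q.1.2 (s : EReal))| < ε * (1 + |s|) := by
  have hpos : (0:ℝ) < 1 + |s| := by positivity
  have h1 := phi_le_pathDist p q (s : EReal)
  rw [PhiBar_coe, PhiBar_coe, div_sub_div_same, abs_div, abs_of_pos hpos] at h1
  have h2 : |etanh (p.1.2 (s : EReal)) - etanh (q.1.2 (s : EReal))| / (1 + |s|) < ε :=
    lt_of_le_of_lt h1 h
  calc |etanh (p.1.2 (s : EReal)) - etanh (q.1.2 (s : EReal))|
      = |etanh (p.1.2 (s : EReal)) - etanh (q.1.2 (s : EReal))| / (1 + |s|) * (1 + |s|) := by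
        field_simp
    _ < ε * (1 + |s|) := mul_lt_mul_of_pos_right h2 hpos


/-- The set `{K ∈ H : η̃(K) ≥ k}` is open in the Hausdorff metric topology on the space of
nonempty compact sets of paths. -/
theorem stmt_13 (t₀ t a b e₁ e₂ : ℝ) (ht : 0 < t) (hab : a < b)
    (he₁ : 0 < e₁) (he₂ : 0 < e₂) (he₂t : e₂ < t) (k : ℕ) :
    ∀ K : Set PathSpace, IsPathCompact K → CountGE t₀ t a b e₁ e₂ k K →
      ∃ ε > (0:ℝ), ∀ K' : Set PathSpace, IsPathCompact K' →
        hausdDist K K' < ε → CountGE t₀ t a b e₁ e₂ k K' := by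
  intro K hK hC
  obtain ⟨S, hcard, hS⟩ := hC
  by_cases hSne : S.Nonempty
  swap
  · exact ⟨1, one_pos, fun K' _ _ => ⟨S, hcard, fun x hx => absurd ⟨x, hx⟩ hSne⟩⟩
  have hS2 : ∀ x ∈ S, ∃ p : PathSpace, ∃ yy : ℝ, p ∈ K ∧
      p.1.1 < ((t₀ + e₂ : ℝ) : EReal) ∧ yy ∈ Set.Ioo (a - e₁) (b + e₁) ∧
      p.1.2 ((t₀ + e₂ : ℝ) : EReal) = (yy : EReal) ∧ TouchesPt p x (t₀ + t) := by
    intro x hx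
    obtain ⟨pp, hpK, h1, ⟨yy, hy1, hy2⟩, h3⟩ := hS x hx
    exact ⟨pp, yy, hpK, h1, hy1, hy2, h3⟩
  obtain ⟨p₀, hp₀⟩ := hK.1
  haveI : Nonempty PathSpace := ⟨p₀⟩
  choose! p y hpK hlt hyI heq htch using hS2
  obtain ⟨δ, hδpos, hδ⟩ := exists_sep S
  set T1 : ℝ := 1 + |t₀ + e₂| with hT1def
  set T2 : ℝ := 1 + |t₀ + t| with hT2def
  have hT1 : (0:ℝ) < T1 := by positivity
  have hT2 : (0:ℝ) < T2 := by positivity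
  set m : ℝ → ℝ := fun x => min (Real.tanh (t₀ + e₂) - etanh (p x).1.1)
      (min ((min (Real.tanh (y x) - Real.tanh (a - e₁))
          (Real.tanh (b + e₁) - Real.tanh (y x))) / T1)
        ((1 - |Real.tanh x|) / T2)) with hmdef
  have hmpos : ∀ x ∈ S, 0 < m x := by
    intro x hx
    have h1 : etanh (p x).1.1 < Real.tanh (t₀ + e₂) := by
      have := etanh_strictMono (hlt x hx)
      rwa [etanh_coe] at this
    obtain ⟨hy1, hy2⟩ := hyI x hx
    have h2 : Real.tanh (a - e₁) < Real.tanh (y x) := tanh_strictMono' hy1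
    have h3 : Real.tanh (y x) < Real.tanh (b + e₁) := tanh_strictMono' hy2
    have h4 : |Real.tanh x| < 1 :=
      abs_lt.mpr ⟨neg_one_lt_tanh' x, tanh_lt_one' x⟩
    exact lt_min (by linarith) (lt_min (div_pos (lt_min (by linarith) (by linarith)) hT1)
      (div_pos (by linarith) hT2))
  set ε : ℝ := min (S.inf' hSne m) (δ / 2 / T2) with hεdef
  have hεpos : 0 < ε := lt_min ((Finset.lt_inf'_iff hSne).mpr hmpos) (by positivity)
  refine ⟨ε, hεpos, fun K' hK' hdist => ?_⟩
  have hq : ∀ x ∈ S, ∃ q ∈ K', pathDist (p x) q < ε :=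
    fun x hx => exists_close hK'.1 (hpK x hx) hdist
  choose! q hqK hqd using hq
  have hεm : ∀ x ∈ S, ε ≤ m x := fun x hx =>
    le_trans (min_le_left _ _) (Finset.inf'_le m hx)
  set g : ℝ → ℝ := fun x => ((q x).1.2 ((t₀ + t : ℝ) : EReal)).toReal with hgdef
  -- key fact at time t₀+t
  have hkey : ∀ x ∈ S, (q x).1.2 ((t₀ + t : ℝ) : EReal) = ((g x : ℝ) : EReal) ∧
      |Real.tanh (g x) - Real.tanh x| < δ / 2 := by
    intro x hx
    have h2 := (htch x hx).2
    have hest := key_est (hqd x hx) (t₀ + t)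
    rw [h2, etanh_coe, ← hT2def] at hest
    have hεT2a : ε * T2 ≤ 1 - |Real.tanh x| := by
      have := le_trans (hεm x hx) (le_trans (min_le_right _ _) (min_le_right _ _))
      rwa [le_div_iff₀ hT2] at this
    have hεT2b : ε * T2 ≤ δ / 2 := by
      have := min_le_right (S.inf' hSne m) (δ / 2 / T2)
      have h' : ε ≤ δ / 2 / T2 := le_trans (le_refl ε) this
      rwa [le_div_iff₀ hT2] at h'
    have habs : |Real.tanh x - etanh ((q x).1.2 ((t₀ + t : ℝ) : EReal))| < 1 - |Real.tanh x| :=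
      lt_of_lt_of_le hest hεT2a
    have hfin1 : |etanh ((q x).1.2 ((t₀ + t : ℝ) : EReal))| < 1 := by
      have := abs_sub_abs_le_abs_sub (etanh ((q x).1.2 ((t₀ + t : ℝ) : EReal))) (Real.tanh x)
      rw [abs_sub_comm] at habs
      linarith
    have hfin := etanh_finite hfin1
    refine ⟨hfin, ?_⟩
    have : etanh ((q x).1.2 ((t₀ + t : ℝ) : EReal)) = Real.tanh (g x) := by
      rw [hfin, etanh_coe]
    rw [this] at hest
    rw [abs_sub_comm] at hest
    exact lt_of_lt_of_le hest hεT2b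
  refine ⟨S.image g, ?_, ?_⟩
  · rw [Finset.card_image_of_injOn, hcard]
    intro x₁ hx₁ x₂ hx₂ hne
    by_contra hne'
    have h1 := (hkey x₁ hx₁).2
    have h2 := (hkey x₂ hx₂).2
    have h3 := hδ x₁ hx₁ x₂ hx₂ hne'
    rw [hne] at h1
    have h4 : |Real.tanh x₁ - Real.tanh x₂| ≤
        |Real.tanh x₁ - Real.tanh (g x₂)| + |Real.tanh (g x₂) - Real.tanh x₂| :=
      abs_sub_le _ _ _
    have h5 : |Real.tanh x₁ - Real.tanh (g x₂)| < δ / 2 := by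
      rw [abs_sub_comm]; exact h1
    linarith
  · intro x' hx'
    obtain ⟨x, hx, rfl⟩ := Finset.mem_image.mp hx'
    refine ⟨q x, hqK x hx, ?_, ?_, ?_⟩
    · -- start time
      have hψ := psi_le_pathDist (p x) (q x)
      have hψ' : |etanh (p x).1.1 - etanh (q x).1.1| < ε := lt_of_le_of_lt hψ (hqd x hx)
      have hεa : ε ≤ Real.tanh (t₀ + e₂) - etanh (p x).1.1 :=
        le_trans (hεm x hx) (min_le_left _ _)
      have : etanh (q x).1.1 < Real.tanh (t₀ + e₂) := by
        have := abs_lt.mp hψ'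
        linarith [this.1, this.2]
      have hlt' : etanh (q x).1.1 < etanh ((t₀ + e₂ : ℝ) : EReal) := by
        rwa [etanh_coe]
      exact lt_of_etanh_lt hlt'
    · -- crossing the window at t₀+e₂
      have hest := key_est (hqd x hx) (t₀ + e₂)
      rw [heq x hx, etanh_coe, ← hT1def] at hest
      have hεb : ε * T1 ≤ min (Real.tanh (y x) - Real.tanh (a - e₁))
          (Real.tanh (b + e₁) - Real.tanh (y x)) := by
        have := le_trans (hεm x hx) (le_trans (min_le_right _ _) (min_le_left _ _))
        rwa [le_div_iff₀ hT1] at this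
      have hb1 : ε * T1 ≤ Real.tanh (y x) - Real.tanh (a - e₁) :=
        le_trans hεb (min_le_left _ _)
      have hb2 : ε * T1 ≤ Real.tanh (b + e₁) - Real.tanh (y x) :=
        le_trans hεb (min_le_right _ _)
      obtain ⟨he1, he2⟩ := abs_lt.mp hest
      have hlo : Real.tanh (a - e₁) < etanh ((q x).1.2 ((t₀ + e₂ : ℝ) : EReal)) := by linarith
      have hhi : etanh ((q x).1.2 ((t₀ + e₂ : ℝ) : EReal)) < Real.tanh (b + e₁) := by linarith
      have hfin1 : |etanh ((q x).1.2 ((t₀ + e₂ : ℝ) : EReal))| < 1 :=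
        abs_lt.mpr ⟨by linarith [neg_one_lt_tanh' (a - e₁)], by linarith [tanh_lt_one' (b + e₁)]⟩
      have hfin := etanh_finite hfin1
      refine ⟨((q x).1.2 ((t₀ + e₂ : ℝ) : EReal)).toReal, ?_, hfin⟩
      rw [hfin, etanh_coe] at hlo hhi
      exact ⟨tanh_strictMono'.lt_iff_lt.mp hlo, tanh_strictMono'.lt_iff_lt.mp hhi⟩
    · -- touching at t₀+t
      constructor
      · -- start time ≤ t₀+t : reuse first part
        have hψ := psi_le_pathDist (p x) (q x)
        have hψ' : |etanh (p x).1.1 - etanh (q x).1.1| < ε := lt_of_le_of_lt hψ (hqd x hx)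
        have hεa : ε ≤ Real.tanh (t₀ + e₂) - etanh (p x).1.1 :=
          le_trans (hεm x hx) (min_le_left _ _)
        have h1 : etanh (q x).1.1 < Real.tanh (t₀ + e₂) := by
          have := abs_lt.mp hψ'
          linarith [this.1, this.2]
        have h2 : etanh (q x).1.1 < etanh ((t₀ + e₂ : ℝ) : EReal) := by rwa [etanh_coe]
        have h3 : (q x).1.1 < ((t₀ + e₂ : ℝ) : EReal) := lt_of_etanh_lt h2
        refine le_trans h3.le (EReal.coe_le_coe_iff.mpr (by linarith))
      · exact (hkey x hx).1
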